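/- arXiv:1908.11516 — 6 statements merged into one kernel-verified Lean document; each statement's English description precedes it below -/
import Mathlib

section
/- Let k ≥ 2, let c_1,...,c_{k-1} be positive integers, set s = c_1 + ... + c_{k-1} - 1 and assume s ≥ 1, and let b be a positive integer with s | b. Let E(0) be the equation c_1x_1 + ... + c_{k-1}x_{k-1} = x_k and E(-b) the equation c_1x_1 + ... + c_{k-1}x_{k-1} = x_k - b. If E(0) is t-regular with t-color Rado number R = r(E(0);t), then every t-coloring of the interval [1, (b/s + 1)·R - b/s] admits a monochromatic solution of E(-b); in particular r(E(-b);t) ≤ (b/s + 1)·R - b/s. -/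
/-- upper bound for `E(-b)`.
Let `k ≥ 2`, `c 0, …, c (k-2)` positive integers, `s = c 0 + … + c (k-2) - 1 ≥ 1`,
and `b > 0` with `s ∣ b`.  If `E(0) : ∑ cᵢ xᵢ = x_k` is `t`-regular with `t`-color Rado
number `R`, then every `t`-coloring of `[1, (b/s + 1)·R - b/s]` admits a monochromatic
solution of `E(-b) : ∑ cᵢ xᵢ + b = x_k`; in particular `r(E(-b); t) ≤ (b/s + 1)·R - b/s`. -/
theorem rado_upper_bound_neg_b
    (k t b s R : ℕ) (c : Fin (k - 1) → ℕ)
    (hk : 2 ≤ k) (ht : 1 ≤ t) (hc : ∀ i, 0 < c i)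
    (hs : s = (∑ i, c i) - 1) (hs1 : 1 ≤ s) (hb : 0 < b) (hsb : s ∣ b)
    (hR : IsLeast {N : ℕ | ∀ χ : ℕ → Fin t,
        ∃ (x : Fin (k - 1) → ℕ) (y : ℕ),
          (∀ i, x i ∈ Finset.Icc 1 N) ∧ y ∈ Finset.Icc 1 N ∧
          (∑ i, c i * x i) = y ∧ (∀ i, χ (x i) = χ y)} R) :
    (∀ χ : ℕ → Fin t,
        ∃ (x : Fin (k - 1) → ℕ) (y : ℕ),
          (∀ i, x i ∈ Finset.Icc 1 ((b / s + 1) * R - b / s)) ∧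
          y ∈ Finset.Icc 1 ((b / s + 1) * R - b / s) ∧
          (∑ i, c i * x i) + b = y ∧ (∀ i, χ (x i) = χ y)) ∧
    (∀ r : ℕ, IsLeast {N : ℕ | ∀ χ : ℕ → Fin t,
        ∃ (x : Fin (k - 1) → ℕ) (y : ℕ),
          (∀ i, x i ∈ Finset.Icc 1 N) ∧ y ∈ Finset.Icc 1 N ∧
          (∑ i, c i * x i) + b = y ∧ (∀ i, χ (x i) = χ y)} r →
      r ≤ (b / s + 1) * R - b / s) := by
  have hbd : b = s * (b / s) := (Nat.mul_div_cancel' hsb).symm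
  have hsum : ∑ i, c i = s + 1 := by
    have h1 : 0 < ∑ i, c i := by
      have hpos : (0:ℕ) < k - 1 := by omega
      have hne : (Finset.univ : Finset (Fin (k-1))).Nonempty := by
        exact ⟨⟨0, hpos⟩, Finset.mem_univ _⟩
      exact Finset.sum_pos (fun i _ => hc i) hne
    omega
  set d := b / s with hd
  have key : ∀ χ : ℕ → Fin t,
      ∃ (x : Fin (k - 1) → ℕ) (y : ℕ),
        (∀ i, x i ∈ Finset.Icc 1 ((d + 1) * R - d)) ∧
        y ∈ Finset.Icc 1 ((d + 1) * R - d) ∧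
        (∑ i, c i * x i) + b = y ∧ (∀ i, χ (x i) = χ y) := by
    intro χ
    obtain ⟨x, y, hx, hy, heq, hcol⟩ := hR.1 (fun n => χ ((d+1)*n - d))
    simp only [Finset.mem_Icc] at hx hy
    have hy1 : 1 ≤ y := hy.1
    have hyR : y ≤ R := hy.2
    refine ⟨fun i => (d+1)*(x i - 1) + 1, (d+1)*(y - 1) + 1, ?_, ?_, ?_, ?_⟩
    · intro i
      simp only [Finset.mem_Icc]
      have h1 : (d+1)*(x i) = (d+1)*(x i - 1) + (d+1) := by
        have := (hx i).1
        conv_lhs => rw [show x i = (x i - 1) + 1 by omega]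
        ring
      have h2 : (d+1)*(x i) ≤ (d+1)*R := Nat.mul_le_mul_left _ (hx i).2
      omega
    · simp only [Finset.mem_Icc]
      have h1 : (d+1)*y = (d+1)*(y - 1) + (d+1) := by
        conv_lhs => rw [show y = (y - 1) + 1 by omega]
        ring
      have h2 : (d+1)*y ≤ (d+1)*R := Nat.mul_le_mul_left _ hyR
      omega
    · show (∑ i, c i * ((d + 1) * (x i - 1) + 1)) + b = (d+1)*(y-1) + 1
      have h4 : (d+1)*s = s*d + s := by ring
      have hL : ∑ i, c i * ((d+1)*(x i - 1) + 1)
          = (d+1) * (∑ i, c i * (x i - 1)) + (s + 1) := by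
        rw [Finset.mul_sum, ← hsum, ← Finset.sum_add_distrib]
        exact Finset.sum_congr rfl (fun i _ => by ring)
      have hT : ∑ i, c i * x i = (∑ i, c i * (x i - 1)) + (s + 1) := by
        rw [← hsum, ← Finset.sum_add_distrib]
        refine Finset.sum_congr rfl (fun i _ => ?_)
        have := (hx i).1
        conv_lhs => rw [show x i = (x i - 1) + 1 by omega]
        ring
      have h3 : (d+1)*(y-1) = (d+1) * (∑ i, c i * (x i - 1)) + (d+1) * s := by
        rw [← Nat.mul_add]
        congr 1
        omega
      omega
    · intro i
      have h := hcol i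
      have e1 : (d+1)*(x i) - d = (d+1)*(x i - 1) + 1 := by
        have h1 : (d+1)*(x i) = (d+1)*(x i - 1) + (d+1) := by
          have := (hx i).1
          conv_lhs => rw [show x i = (x i - 1) + 1 by omega]
          ring
        omega
      have e2 : (d+1)*y - d = (d+1)*(y - 1) + 1 := by
        have h1 : (d+1)*y = (d+1)*(y - 1) + (d+1) := by
          conv_lhs => rw [show y = (y - 1) + 1 by omega]
          ring
        omega
      rw [e1, e2] at h
      exact h
  exact ⟨key, fun r hr => hr.2 key⟩
end

section
/- Let k ≥ 2, let c_1,...,c_{k-1} be positive integers, set s = c_1 + ... + c_{k-1} - 1 and assume s ≥ 1, and let b be a positive integer with s | b. Let E(-b) be the equation c_1x_1 + ... + c_{k-1}x_{k-1} = x_k - b. If there exists a t-coloring of [1,n] satisfying the excellence condition (with respect to c_1,...,c_{k-1}), then there exists a t-coloring of the interval [1, (b/s + 1)·n] admitting no monochromatic solution of E(-b); in particular, if r(E(-b);t) exists then r(E(-b);t) ≥ (b/s + 1)·n + 1. -/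
/-- lower bound for `E(-b)` from the excellence condition.
Let `k ≥ 2`, `c 0, …, c (k-2)` positive, `s = ∑ cᵢ - 1 ≥ 1`, `b > 0` with `s ∣ b`.
If some `t`-coloring of `[1, n]` satisfies the excellence condition (no monochromatic
solution of `∑ cᵢ xᵢ + j = x_k` for any `0 ≤ j ≤ s`), then some `t`-coloring of
`[1, (b/s + 1)·n]` admits no monochromatic solution of `E(-b) : ∑ cᵢ xᵢ + b = x_k`;
in particular, if `r(E(-b); t)` exists then `r(E(-b); t) ≥ (b/s + 1)·n + 1`. -/
theorem rado_lower_bound_neg_b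
    (k t b s n : ℕ) (c : Fin (k - 1) → ℕ)
    (hk : 2 ≤ k) (ht : 1 ≤ t) (hc : ∀ i, 0 < c i)
    (hs : s = (∑ i, c i) - 1) (hs1 : 1 ≤ s) (hb : 0 < b) (hsb : s ∣ b)
    (hexc : ∃ χ : ℕ → Fin t, ∀ j ≤ s,
        ¬ ∃ (x : Fin (k - 1) → ℕ) (y : ℕ),
            (∀ i, x i ∈ Finset.Icc 1 n) ∧ y ∈ Finset.Icc 1 n ∧
            (∑ i, c i * x i) + j = y ∧ (∀ i, χ (x i) = χ y)) :
    (∃ α : ℕ → Fin t,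
        ¬ ∃ (x : Fin (k - 1) → ℕ) (y : ℕ),
            (∀ i, x i ∈ Finset.Icc 1 ((b / s + 1) * n)) ∧
            y ∈ Finset.Icc 1 ((b / s + 1) * n) ∧
            (∑ i, c i * x i) + b = y ∧ (∀ i, α (x i) = α y)) ∧
    (∀ r : ℕ, IsLeast {N : ℕ | ∀ χ : ℕ → Fin t,
        ∃ (x : Fin (k - 1) → ℕ) (y : ℕ),
          (∀ i, x i ∈ Finset.Icc 1 N) ∧ y ∈ Finset.Icc 1 N ∧
          (∑ i, c i * x i) + b = y ∧ (∀ i, χ (x i) = χ y)} r →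
      (b / s + 1) * n + 1 ≤ r) := by
  obtain ⟨χ, hχ⟩ := hexc
  obtain ⟨q, hq⟩ := hsb
  have hs0 : 0 < s := hs1
  have hq1 : 1 ≤ q := by
    rcases Nat.eq_zero_or_pos q with h | h
    · subst h; omega
    · exact h
  have hbs : b / s = q := by rw [hq, Nat.mul_div_cancel_left _ hs0]
  set m := q + 1 with hm
  have hm0 : 0 < m := by omega
  have hmn : (b / s + 1) * n = m * n := by rw [hbs]
  have hsum : ∑ i, c i = s + 1 := by
    have hne : Nonempty (Fin (k - 1)) := ⟨⟨0, by omega⟩⟩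
    have h1 : 0 < ∑ i, c i :=
      Finset.sum_pos (fun i _ => hc i) Finset.univ_nonempty
    omega
  -- ceiling division facts
  have ceil : ∀ x : ℕ, x ∈ Finset.Icc 1 (m * n) →
      ((x + m - 1) / m) ∈ Finset.Icc 1 n ∧ x ≤ m * ((x + m - 1) / m) ∧
        m * ((x + m - 1) / m) ≤ x + (m - 1) := by
    intro x hx
    rw [Finset.mem_Icc] at hx
    set u := (x + m - 1) / m with hu
    obtain ⟨A, r', hA, hr', hAdef⟩ : ∃ A r', A + r' = x + m - 1 ∧ r' < m ∧ A = m * u :=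
      ⟨m * u, (x + m - 1) % m, Nat.div_add_mod _ _, Nat.mod_lt _ hm0, rfl⟩
    have hx1 : x ≤ A := by omega
    have hx2 : A ≤ x + (m - 1) := by omega
    have hu1 : 1 ≤ u := by
      rcases Nat.eq_zero_or_pos u with h | h
      · rw [h, mul_zero] at hAdef; omega
      · exact h
    have hu2 : u ≤ n := by
      by_contra h
      push_neg at h
      have : m * (n + 1) ≤ m * u := Nat.mul_le_mul_left m h
      have : m * (n + 1) = m * n + m := by ring
      omega
    rw [Finset.mem_Icc]
    omega
  -- the coloring
  set α : ℕ → Fin t := fun z => χ ((z + m - 1) / m) with hα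
  have key : ∀ N ≤ m * n, ¬ ∃ (x : Fin (k - 1) → ℕ) (y : ℕ),
      (∀ i, x i ∈ Finset.Icc 1 N) ∧ y ∈ Finset.Icc 1 N ∧
      (∑ i, c i * x i) + b = y ∧ (∀ i, α (x i) = α y) := by
    intro N hN ⟨x, y, hx, hy, heq, hmono⟩
    have hx' : ∀ i, x i ∈ Finset.Icc 1 (m * n) := fun i => by
      have := hx i; rw [Finset.mem_Icc] at *; omega
    have hy' : y ∈ Finset.Icc 1 (m * n) := by
      rw [Finset.mem_Icc] at *; omega
    set u : Fin (k - 1) → ℕ := fun i => (x i + m - 1) / m with hu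
    set v : ℕ := (y + m - 1) / m with hv
    have hui : ∀ i, u i ∈ Finset.Icc 1 n ∧ x i ≤ m * u i ∧ m * u i ≤ x i + (m - 1) :=
      fun i => ceil (x i) (hx' i)
    have hvi : v ∈ Finset.Icc 1 n ∧ y ≤ m * v ∧ m * v ≤ y + (m - 1) := ceil y hy'
    set S := ∑ i, c i * u i with hS
    have hS1 : ∑ i, c i * x i ≤ m * S := by
      calc ∑ i, c i * x i ≤ ∑ i, c i * (m * u i) :=
            Finset.sum_le_sum fun i _ => Nat.mul_le_mul_left _ (hui i).2.1
        _ = m * S := by rw [hS, Finset.mul_sum]; congr 1; ext i; ring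
    have hS2 : m * S ≤ ∑ i, c i * x i + (s + 1) * (m - 1) := by
      calc m * S = ∑ i, c i * (m * u i) := by
            rw [hS, Finset.mul_sum]; congr 1; ext i; ring
        _ ≤ ∑ i, c i * (x i + (m - 1)) :=
            Finset.sum_le_sum fun i _ => Nat.mul_le_mul_left _ (hui i).2.2
        _ = ∑ i, (c i * x i + c i * (m - 1)) := by
            exact Finset.sum_congr rfl fun i _ => mul_add _ _ _
        _ = ∑ i, c i * x i + (∑ i, c i) * (m - 1) := by
            rw [Finset.sum_add_distrib, Finset.sum_mul]
        _ = ∑ i, c i * x i + (s + 1) * (m - 1) := by rw [hsum]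
    have hmq : m - 1 = q := by omega
    rw [hmq] at hvi hS2
    have e1 : (s + 1) * q = s * q + q := by ring
    -- lower bound : S ≤ v
    have hlow : S ≤ v := by
      have h1 : m * S ≤ m * v + q := by omega
      by_contra h
      push_neg at h
      have h2 : m * (v + 1) ≤ m * S := Nat.mul_le_mul_left m h
      have e2 : m * (v + 1) = m * v + m := by ring
      omega
    -- upper bound : v ≤ S + s
    have hhigh : v ≤ S + s := by
      by_contra h
      push_neg at h
      have h2 : m * (S + s + 1) ≤ m * v := Nat.mul_le_mul_left m h
      have e3 : m * (S + s + 1) = m * S + m * s + m := by ring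
      have e4 : m * s = s * q + s := by rw [hm]; ring
      omega
    refine hχ (v - S) (by omega) ⟨u, v, fun i => (hui i).1, hvi.1, by omega, fun i => ?_⟩
    exact hmono i
  constructor
  · exact ⟨α, by rw [hmn]; exact key (m * n) le_rfl⟩
  · intro r hr
    by_contra h
    push_neg at h
    obtain ⟨x, y, hx, hy, heq, hmono⟩ := hr.1 α
    exact key r (by omega) ⟨x, y, hx, hy, heq, hmono⟩
end

section
/- Let k ≥ 2, let c_1,...,c_{k-1} be positive integers, set s = c_1 + ... + c_{k-1} - 1 and assume s ≥ 1, and let b be a positive integer with s | b. Let E(0) be the equation c_1x_1 + ... + c_{k-1}x_{k-1} = x_k and E(b) the equation c_1x_1 + ... + c_{k-1}x_{k-1} = x_k + b. If E(0) is t-regular with t-color Rado number R = r(E(0);t), then every t-coloring of the interval [1, b/s - ⌈b/(s·R)⌉ + 1] admits a monochromatic solution of E(b); in particular r(E(b);t) ≤ b/s - ⌈b/(s·R)⌉ + 1. -/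
/-- upper bound for `E(b)`, `b > 0`.
Let `k ≥ 2`, `c 0, …, c (k-2)` positive, `s = ∑ cᵢ - 1 ≥ 1`, and `b > 0` with `s ∣ b`.
If `E(0) : ∑ cᵢ xᵢ = x_k` is `t`-regular with `t`-color Rado number `R`, then every
`t`-coloring of `[1, b/s - ⌈b/(s·R)⌉ + 1]` admits a monochromatic solution of
`E(b) : ∑ cᵢ xᵢ = x_k + b`; in particular `r(E(b); t) ≤ b/s - ⌈b/(s·R)⌉ + 1`.
(`⌈/⌉` is ceiling division on `ℕ`.) -/
theorem rado_upper_bound_pos_b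
    (k t b s R : ℕ) (c : Fin (k - 1) → ℕ)
    (hk : 2 ≤ k) (ht : 1 ≤ t) (hc : ∀ i, 0 < c i)
    (hs : s = (∑ i, c i) - 1) (hs1 : 1 ≤ s) (hb : 0 < b) (hsb : s ∣ b)
    (hR : IsLeast {N : ℕ | ∀ χ : ℕ → Fin t,
        ∃ (x : Fin (k - 1) → ℕ) (y : ℕ),
          (∀ i, x i ∈ Finset.Icc 1 N) ∧ y ∈ Finset.Icc 1 N ∧
          (∑ i, c i * x i) = y ∧ (∀ i, χ (x i) = χ y)} R) :
    (∀ χ : ℕ → Fin t,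
        ∃ (x : Fin (k - 1) → ℕ) (y : ℕ),
          (∀ i, x i ∈ Finset.Icc 1 (b / s - b ⌈/⌉ (s * R) + 1)) ∧
          y ∈ Finset.Icc 1 (b / s - b ⌈/⌉ (s * R) + 1) ∧
          (∑ i, c i * x i) = y + b ∧ (∀ i, χ (x i) = χ y)) ∧
    (∀ r : ℕ, IsLeast {N : ℕ | ∀ χ : ℕ → Fin t,
        ∃ (x : Fin (k - 1) → ℕ) (y : ℕ),
          (∀ i, x i ∈ Finset.Icc 1 N) ∧ y ∈ Finset.Icc 1 N ∧
          (∑ i, c i * x i) = y + b ∧ (∀ i, χ (x i) = χ y)} r →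
      r ≤ b / s - b ⌈/⌉ (s * R) + 1) := by
  have hk1 : 0 < k - 1 := by omega
  have i0 : Fin (k - 1) := ⟨0, hk1⟩
  -- R ≥ 1
  have hR1 : 1 ≤ R := by
    rcases Nat.eq_zero_or_pos R with h | h
    · exfalso
      obtain ⟨x, y, hx, -, -, -⟩ := hR.1 (fun _ => ⟨0, ht⟩)
      have := hx i0
      rw [h] at this
      simp at this
    · exact h
  -- sum of coefficients
  have hS : ∑ i, c i = s + 1 := by
    have hpos : 0 < ∑ i, c i :=
      Finset.sum_pos (fun i _ => hc i) ⟨i0, Finset.mem_univ i0⟩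
    omega
  obtain ⟨d, hbd⟩ := hsb
  have hd1 : 1 ≤ d := by
    rcases Nat.eq_zero_or_pos d with h | h
    · subst h; simp at hbd; omega
    · exact h
  obtain ⟨e, rfl⟩ : ∃ e, d = e + 1 := ⟨d - 1, by omega⟩
  have hds : b / s = e + 1 := by
    rw [hbd]; exact Nat.mul_div_cancel_left _ (by omega)
  obtain ⟨q, hq'⟩ : ∃ q, (e + R) / R = q := ⟨_, rfl⟩
  have hceilR : (e + 1) ⌈/⌉ R = q := by
    rw [Nat.ceilDiv_eq_add_pred_div, show e + 1 + R - 1 = e + R by omega, hq']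
  have hdm := Nat.div_add_mod (e + R) R
  have hdm2 : (e + R) % R < R := Nat.mod_lt _ (by omega)
  have hcm : R * ((e + R) / R) = ((e + R) / R) * R := Nat.mul_comm _ _
  rw [hq'] at hdm hcm
  have hA : q * R ≤ e + R := by omega
  have hB : e + 1 ≤ q * R := by omega
  have hq1 : 1 ≤ q := by
    rcases Nat.eq_zero_or_pos q with h | h
    · rw [h] at hB; simp at hB
    · exact h
  obtain ⟨a, hqa⟩ : ∃ a, q = a + 1 := ⟨q - 1, by omega⟩
  have hA' : a * R + R ≤ e + R := by
    have h1 : (a + 1) * R = a * R + R := by ring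
    rw [hqa, h1] at hA; exact hA
  have hB' : e + 1 ≤ a * R + R := by
    have h1 : (a + 1) * R = a * R + R := by ring
    rw [hqa, h1] at hB; exact hB
  have haR : a * R ≤ e := by omega
  have hqe : q ≤ e + 1 := by
    have h1 : a ≤ a * R := Nat.le_mul_of_pos_right a (by omega)
    omega
  -- the ceiling division identity: b ⌈/⌉ (s*R) = q
  have hceil : b ⌈/⌉ (s * R) = q := by
    rw [Nat.ceilDiv_eq_add_pred_div]
    apply Nat.div_eq_of_lt_le
    · have t1 : q * (s * R) = s * (q * R) := by ring
      have t2 : s * (q * R) ≤ s * (e + R) := Nat.mul_le_mul_left s hA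
      have t3 : s * (e + R) = s * e + s * R := by ring
      have t4 : s * (e + 1) = s * e + s := by ring
      rw [hbd]
      omega
    · have t5 : s * (e + 1) ≤ s * (q * R) := Nat.mul_le_mul_left s hB
      have t6 : (q + 1) * (s * R) = s * (q * R) + s * R := by ring
      have t1 : q * (s * R) = s * (q * R) := by ring
      have t7 : 0 < s * R := Nat.mul_pos (by omega) (by omega)
      have t4 : s * (e + 1) = s * e + s := by ring
      rw [hbd]
      omega
  have hM : b / s - b ⌈/⌉ (s * R) + 1 = (e + 1) - q + 1 := by
    rw [hds, hceil]
  rw [hM]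
  have main : ∀ χ : ℕ → Fin t,
      ∃ (x : Fin (k - 1) → ℕ) (y : ℕ),
        (∀ i, x i ∈ Finset.Icc 1 ((e + 1) - q + 1)) ∧
        y ∈ Finset.Icc 1 ((e + 1) - q + 1) ∧
        (∑ i, c i * x i) = y + b ∧ (∀ i, χ (x i) = χ y) := by
    intro χ
    obtain ⟨x, y, hx, hy, heq, hcol⟩ := hR.1 (fun n => χ ((e + 1) - a * n))
    refine ⟨fun i => (e + 1) - a * x i, (e + 1) - a * y, ?_, ?_, ?_, ?_⟩
    · intro i
      have hxi := Finset.mem_Icc.1 (hx i)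
      have h1 : a * x i ≤ a * R := Nat.mul_le_mul_left a hxi.2
      have h2 : a ≤ a * x i := Nat.le_mul_of_pos_right a (by omega)
      rw [Finset.mem_Icc]
      show 1 ≤ e + 1 - a * x i ∧ e + 1 - a * x i ≤ e + 1 - q + 1
      omega
    · have hyi := Finset.mem_Icc.1 hy
      have h1 : a * y ≤ a * R := Nat.mul_le_mul_left a hyi.2
      have h2 : a ≤ a * y := Nat.le_mul_of_pos_right a (by omega)
      rw [Finset.mem_Icc]
      omega
    · -- the equation
      show (∑ i, c i * ((e + 1) - a * x i)) = ((e + 1) - a * y) + b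
      have hax : ∀ i, a * x i ≤ e + 1 := by
        intro i
        have hxi := Finset.mem_Icc.1 (hx i)
        have h1 : a * x i ≤ a * R := Nat.mul_le_mul_left a hxi.2
        omega
      have hay : a * y ≤ e + 1 := by
        have hyi := Finset.mem_Icc.1 hy
        have h1 : a * y ≤ a * R := Nat.mul_le_mul_left a hyi.2
        omega
      have hsum : (∑ i, c i * (a * x i)) + (∑ i, c i * ((e + 1) - a * x i))
          = (∑ i, c i) * (e + 1) := by
        rw [← Finset.sum_add_distrib, Finset.sum_mul]
        refine Finset.sum_congr rfl fun i _ => ?_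
        rw [← Nat.mul_add, Nat.add_sub_cancel' (hax i)]
      have hfirst : (∑ i, c i * (a * x i)) = a * y := by
        rw [← heq, Finset.mul_sum]
        refine Finset.sum_congr rfl fun i _ => by ring
      have hSd : (∑ i, c i) * (e + 1) = (e + 1) + b := by
        rw [hS, hbd]; ring
      rw [hfirst, hSd] at hsum
      omega
    · intro i
      exact hcol i
  exact ⟨main, fun r hr => hr.2 main⟩
end

section
/- Let k ≥ 2, let c_1,...,c_{k-1} be positive integers, set s = c_1 + ... + c_{k-1} - 1 and assume s ≥ 1, and let b be a positive integer with s | b. Let E(b) be the equation c_1x_1 + ... + c_{k-1}x_{k-1} = x_k + b. If there exists a t-coloring of [1,n] satisfying the excellence condition (with respect to c_1,...,c_{k-1}), then there exists a t-coloring of the interval [1, b/s - ⌈b/(s·(n+1))⌉] admitting no monochromatic solution of E(b); in particular, if r(E(b);t) exists then r(E(b);t) ≥ b/s - ⌈b/(s·(n+1))⌉ + 1. -/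
/-- lower bound for `E(b)`, `b > 0`, from the excellence condition.
Let `k ≥ 2`, `c 0, …, c (k-2)` positive, `s = ∑ cᵢ - 1 ≥ 1`, `b > 0` with `s ∣ b`.
If some `t`-coloring of `[1, n]` satisfies the excellence condition (no monochromatic
solution of `∑ cᵢ xᵢ + j = x_k` for any `0 ≤ j ≤ s`), then some `t`-coloring of
`[1, b/s - ⌈b/(s·(n+1))⌉]` admits no monochromatic solution of
`E(b) : ∑ cᵢ xᵢ = x_k + b`; in particular, if `r(E(b); t)` exists then
`r(E(b); t) ≥ b/s - ⌈b/(s·(n+1))⌉ + 1`.  (`⌈/⌉` is ceiling division on `ℕ`.) -/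
theorem rado_lower_bound_pos_b
    (k t b s n : ℕ) (c : Fin (k - 1) → ℕ)
    (hk : 2 ≤ k) (ht : 1 ≤ t) (hc : ∀ i, 0 < c i)
    (hs : s = (∑ i, c i) - 1) (hs1 : 1 ≤ s) (hb : 0 < b) (hsb : s ∣ b)
    (hexc : ∃ χ : ℕ → Fin t, ∀ j ≤ s,
        ¬ ∃ (x : Fin (k - 1) → ℕ) (y : ℕ),
            (∀ i, x i ∈ Finset.Icc 1 n) ∧ y ∈ Finset.Icc 1 n ∧
            (∑ i, c i * x i) + j = y ∧ (∀ i, χ (x i) = χ y)) :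
    (∃ α : ℕ → Fin t,
        ¬ ∃ (x : Fin (k - 1) → ℕ) (y : ℕ),
            (∀ i, x i ∈ Finset.Icc 1 (b / s - b ⌈/⌉ (s * (n + 1)))) ∧
            y ∈ Finset.Icc 1 (b / s - b ⌈/⌉ (s * (n + 1))) ∧
            (∑ i, c i * x i) = y + b ∧ (∀ i, α (x i) = α y)) ∧
    (∀ r : ℕ, IsLeast {N : ℕ | ∀ χ : ℕ → Fin t,
        ∃ (x : Fin (k - 1) → ℕ) (y : ℕ),
          (∀ i, x i ∈ Finset.Icc 1 N) ∧ y ∈ Finset.Icc 1 N ∧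
          (∑ i, c i * x i) = y + b ∧ (∀ i, χ (x i) = χ y)} r →
      b / s - b ⌈/⌉ (s * (n + 1)) + 1 ≤ r) := by
  obtain ⟨χ, hχ⟩ := hexc
  set m := b / s with hm
  set q := b ⌈/⌉ (s * (n + 1)) with hqdef
  have hs0 : 0 < s := hs1
  have hd : 0 < s * (n + 1) := by positivity
  have hbm : m * s = b := Nat.div_mul_cancel hsb
  have hbq : b ≤ (s * (n + 1)) * q := le_smul_ceilDiv hd
  have hq0 : 0 < q := by
    rcases Nat.eq_zero_or_pos q with h | h
    · rw [h, Nat.mul_zero] at hbq; omega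
    · exact h
  have hmq : m ≤ q * (n + 1) := by
    have h1 : m * s ≤ (q * (n + 1)) * s := by nlinarith
    exact Nat.le_of_mul_le_mul_right h1 hs0
  have hC : ∑ i, c i = s + 1 := by omega
  -- the coloring
  set α : ℕ → Fin t := fun x => χ ((m - x) / q) with hα
  have main : ¬ ∃ (x : Fin (k - 1) → ℕ) (y : ℕ),
      (∀ i, x i ∈ Finset.Icc 1 (m - q)) ∧
      y ∈ Finset.Icc 1 (m - q) ∧
      (∑ i, c i * x i) = y + b ∧ (∀ i, α (x i) = α y) := by
    rintro ⟨x, y, hx, hy, heq, hmono⟩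
    simp only [Finset.mem_Icc] at hx hy
    -- bounds
    have hxb : ∀ i, 1 ≤ x i ∧ x i + q ≤ m := by
      intro i; have := hx i; omega
    have hyb : 1 ≤ y ∧ y + q ≤ m := by omega
    -- the reflected variables
    set z : Fin (k - 1) → ℕ := fun i => m - x i with hz
    set w : ℕ := m - y with hw
    have hzb : ∀ i, q ≤ z i ∧ z i + 1 ≤ m := by
      intro i; have := hxb i; simp only [hz]; omega
    have hwb : q ≤ w ∧ w + 1 ≤ m := by simp only [hw]; omega
    -- key identity : ∑ c i * z i = w
    have hsum1 : (∑ i, c i * z i) + ∑ i, c i * x i = (s + 1) * m := by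
      rw [← Finset.sum_add_distrib]
      have : ∀ i ∈ Finset.univ, c i * z i + c i * x i = c i * m := by
        intro i _
        have hxm : x i ≤ m := by have := hxb i; omega
        rw [hz, ← Nat.mul_add, Nat.sub_add_cancel hxm]
      rw [Finset.sum_congr rfl this, ← Finset.sum_mul, hC]
    have hkey : (∑ i, c i * z i) = w := by
      have h2 : (∑ i, c i * z i) + (y + m * s) = m * s + m := by
        rw [← hbm] at heq
        rw [← heq, hsum1]; ring
      simp only [hw]
      generalize m * s = P at h2
      omega
    -- block indices
    set u : Fin (k - 1) → ℕ := fun i => z i / q with hu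
    set v : ℕ := w / q with hv
    have humem : ∀ i, u i ∈ Finset.Icc 1 n := by
      intro i
      have h1 := hzb i
      have h2 : z i < q * (n + 1) := by omega
      simp only [Finset.mem_Icc, hu]
      constructor
      · exact (Nat.le_div_iff_mul_le hq0).2 (by omega)
      · have h3 : z i < (n + 1) * q := by rw [Nat.mul_comm]; omega
        have := (Nat.div_lt_iff_lt_mul hq0).2 h3
        omega
    have hvmem : v ∈ Finset.Icc 1 n := by
      have h2 : w < q * (n + 1) := by omega
      simp only [Finset.mem_Icc, hv]
      constructor
      · exact (Nat.le_div_iff_mul_le hq0).2 (by omega)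
      · have h3 : w < (n + 1) * q := by rw [Nat.mul_comm]; omega
        have := (Nat.div_lt_iff_lt_mul hq0).2 h3
        omega
    -- ∑ c u ≤ v
    have hlow : (∑ i, c i * u i) ≤ v := by
      refine (Nat.le_div_iff_mul_le hq0).2 ?_
      calc (∑ i, c i * u i) * q = ∑ i, c i * (u i * q) := by
            rw [Finset.sum_mul]; exact Finset.sum_congr rfl fun i _ => by ring
        _ ≤ ∑ i, c i * z i :=
            Finset.sum_le_sum fun i _ => Nat.mul_le_mul_left _ (Nat.div_mul_le_self _ _)
        _ = w := hkey
    -- v ≤ ∑ c u + s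
    have hup : v ≤ (∑ i, c i * u i) + s := by
      have hwle : w ≤ q * (∑ i, c i * u i) + (q - 1) * (s + 1) := by
        calc w = ∑ i, c i * z i := hkey.symm
          _ ≤ ∑ i, c i * (q * u i + (q - 1)) := by
              refine Finset.sum_le_sum fun i _ => Nat.mul_le_mul_left _ ?_
              have h1 := Nat.div_add_mod (z i) q
              have h2 : z i % q < q := Nat.mod_lt _ hq0
              simp only [hu]; omega
          _ = q * (∑ i, c i * u i) + (q - 1) * (s + 1) := by
              have e1 : ∀ i ∈ Finset.univ, c i * (q * u i + (q - 1))
                  = q * (c i * u i) + c i * (q - 1) := fun i _ => by ring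
              rw [Finset.sum_congr rfl e1, Finset.sum_add_distrib, ← Finset.mul_sum,
                ← Finset.sum_mul, hC, Nat.mul_comm (s + 1)]
      have hlt : w < ((∑ i, c i * u i) + s + 1) * q := by
        have hq1 : (q - 1) * (s + 1) + 1 ≤ q * (s + 1) := by
          have : q - 1 < q := by omega
          calc (q - 1) * (s + 1) + 1 ≤ (q - 1) * (s + 1) + (s + 1) := by omega
            _ = (q - 1 + 1) * (s + 1) := by ring
            _ = q * (s + 1) := by rw [Nat.sub_add_cancel hq0]
        calc w ≤ q * (∑ i, c i * u i) + (q - 1) * (s + 1) := hwle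
          _ < q * (∑ i, c i * u i) + q * (s + 1) := by omega
          _ = ((∑ i, c i * u i) + s + 1) * q := by ring
      have := (Nat.div_lt_iff_lt_mul hq0).2 hlt
      simp only [hv]; omega
    -- apply excellence
    refine hχ (v - ∑ i, c i * u i) (by omega) ⟨u, v, humem, hvmem, by omega, ?_⟩
    intro i
    have := hmono i
    simpa [hα, hz, hw, hu, hv] using this
  refine ⟨⟨α, main⟩, ?_⟩
  intro r hr
  by_contra hcon
  push_neg at hcon
  obtain ⟨x, y, hx, hy, heq, hmono⟩ := hr.1 α
  refine main ⟨x, y, fun i => ?_, ?_, heq, hmono⟩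
  · have := hx i; simp only [Finset.mem_Icc] at *; omega
  · simp only [Finset.mem_Icc] at *; omega
end

section
/- Let k ≥ 3 and let b be a positive integer with (k-2) | b, and set m = b/(k-2). Then the 2-color Rado number of the equation x_1 + x_2 + ... + x_{k-1} = x_k + b equals m - ⌈m/(k² - k - 1)⌉ + 1; that is, every 2-coloring of [1, m - ⌈m/(k²-k-1)⌉ + 1] admits a monochromatic solution, and some 2-coloring of [1, m - ⌈m/(k²-k-1)⌉] admits none. -/
private lemma fin2_eq_of_ne {a b c : Fin 2} (h1 : a ≠ c) (h2 : b ≠ c) : a = b := by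
  fin_cases a <;> fin_cases b <;> fin_cases c <;> simp_all

private lemma sum_one_special (n : ℕ) (hn : 0 < n) (x y : ℕ) :
    ∑ i : Fin n, (if i = (⟨0, hn⟩ : Fin n) then x else y) = x + (n - 1) * y := by
  classical
  rw [← Finset.add_sum_erase _ _ (Finset.mem_univ (⟨0, hn⟩ : Fin n))]
  rw [if_pos rfl]
  congr 1
  rw [Finset.sum_congr rfl (fun i hi => if_neg (Finset.ne_of_mem_erase hi)),
    Finset.sum_const, smul_eq_mul, Finset.card_erase_of_mem (Finset.mem_univ _),
    Finset.card_univ, Fintype.card_fin]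

private lemma homog' (k : ℕ) (hk : 3 ≤ k) (ψ : ℕ → Fin 2) :
    ∃ (a : Fin (k - 1) → ℕ) (v : ℕ),
      (∀ i, 1 ≤ a i ∧ a i ≤ k ^ 2 - k - 1) ∧ (1 ≤ v ∧ v ≤ k ^ 2 - k - 1) ∧
      (∑ i, a i) = v ∧ (∀ i, ψ (a i) = ψ v) := by
  obtain ⟨j, rfl⟩ : ∃ j, k = j + 3 := ⟨k - 3, by omega⟩
  have hn : 0 < j + 3 - 1 := by omega
  obtain ⟨jj, hjj⟩ : ∃ p, j * j = p := ⟨_, rfl⟩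
  have hC : (j + 3) ^ 2 - (j + 3) - 1 = jj + 5 * j + 5 := by
    have h1 : (j + 3) ^ 2 = j * j + 6 * j + 9 := by ring
    rw [h1, hjj]; omega
  have hS : (j + 2) ^ 2 = jj + 4 * j + 4 := by
    have h1 : (j + 2) ^ 2 = j * j + 4 * j + 4 := by ring
    rw [h1, hjj]
  have hcard : ∀ z : ℕ, ∑ _i : Fin (j + 3 - 1), z = (j + 2) * z := by
    intro z
    rw [Finset.sum_const, smul_eq_mul, Finset.card_univ, Fintype.card_fin]
    congr 1
  by_cases h1 : ψ (j + 2) = ψ 1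
  · -- pattern (a) : all ones, v = k-1
    have B1 : ∀ _i : Fin (j + 3 - 1),
        1 ≤ (1:ℕ) ∧ (1:ℕ) ≤ (j + 3) ^ 2 - (j + 3) - 1 := fun _ => by omega
    have B2 : 1 ≤ j + 2 ∧ j + 2 ≤ (j + 3) ^ 2 - (j + 3) - 1 := by omega
    have B3 : ∑ _i : Fin (j + 3 - 1), (1:ℕ) = j + 2 := by rw [hcard]; omega
    exact ⟨fun _ => 1, j + 2, B1, B2, B3, fun i => h1.symm⟩
  · by_cases h2 : ψ ((j + 2) ^ 2) = ψ (j + 2)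
    · -- pattern (b) : all (k-1), v = (k-1)^2
      have B1 : ∀ _i : Fin (j + 3 - 1),
          1 ≤ j + 2 ∧ j + 2 ≤ (j + 3) ^ 2 - (j + 3) - 1 := fun _ => by omega
      have B2 : 1 ≤ (j + 2) ^ 2 ∧ (j + 2) ^ 2 ≤ (j + 3) ^ 2 - (j + 3) - 1 := by omega
      have B3 : ∑ _i : Fin (j + 3 - 1), (j + 2) = (j + 2) ^ 2 := by rw [hcard, pow_two]
      exact ⟨fun _ => j + 2, (j + 2) ^ 2, B1, B2, B3, fun i => h2.symm⟩
    · have h2' : ψ ((j + 2) ^ 2) = ψ 1 := fin2_eq_of_ne h2 (fun h => h1 h.symm)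
      by_cases h3 : ψ ((j + 3) ^ 2 - (j + 3) - 1) = ψ 1
      · -- pattern (c) : one (k-1)^2 and (k-2) ones, v = C
        have B1 : ∀ i : Fin (j + 3 - 1),
            1 ≤ (if i = (⟨0, hn⟩ : Fin (j + 3 - 1)) then (j + 2) ^ 2 else 1) ∧
            (if i = (⟨0, hn⟩ : Fin (j + 3 - 1)) then (j + 2) ^ 2 else 1) ≤
              (j + 3) ^ 2 - (j + 3) - 1 := fun i => by split <;> omega
        have B2 : 1 ≤ (j + 3) ^ 2 - (j + 3) - 1 ∧
            (j + 3) ^ 2 - (j + 3) - 1 ≤ (j + 3) ^ 2 - (j + 3) - 1 := by omega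
        have B3 : ∑ i : Fin (j + 3 - 1),
            (if i = (⟨0, hn⟩ : Fin (j + 3 - 1)) then (j + 2) ^ 2 else 1) =
            (j + 3) ^ 2 - (j + 3) - 1 := by
          rw [sum_one_special]; omega
        have B4 : ∀ i : Fin (j + 3 - 1),
            ψ (if i = (⟨0, hn⟩ : Fin (j + 3 - 1)) then (j + 2) ^ 2 else 1) =
            ψ ((j + 3) ^ 2 - (j + 3) - 1) := by
          intro i; split
          · rw [h2', h3]
          · rw [h3]
        exact ⟨_, _, B1, B2, B3, B4⟩
      · have h3' : ψ ((j + 3) ^ 2 - (j + 3) - 1) = ψ (j + 2) :=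
          fin2_eq_of_ne h3 h1
        by_cases h4 : ψ (j + 3) = ψ 1
        · -- pattern (d) : one 1 and (k-2) copies of k, v = (k-1)^2
          have B1 : ∀ i : Fin (j + 3 - 1),
              1 ≤ (if i = (⟨0, hn⟩ : Fin (j + 3 - 1)) then 1 else j + 3) ∧
              (if i = (⟨0, hn⟩ : Fin (j + 3 - 1)) then 1 else j + 3) ≤
                (j + 3) ^ 2 - (j + 3) - 1 := fun i => by split <;> omega
          have B2 : 1 ≤ (j + 2) ^ 2 ∧ (j + 2) ^ 2 ≤ (j + 3) ^ 2 - (j + 3) - 1 := by omega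
          have B3 : ∑ i : Fin (j + 3 - 1),
              (if i = (⟨0, hn⟩ : Fin (j + 3 - 1)) then 1 else j + 3) = (j + 2) ^ 2 := by
            rw [sum_one_special]
            have h5 : 1 + (j + 3 - 1 - 1) * (j + 3) = j * j + 4 * j + 4 := by
              rw [show j + 3 - 1 - 1 = j + 1 by omega]; ring
            rw [hjj] at h5; omega
          have B4 : ∀ i : Fin (j + 3 - 1),
              ψ (if i = (⟨0, hn⟩ : Fin (j + 3 - 1)) then 1 else j + 3) =
              ψ ((j + 2) ^ 2) := by
            intro i; split
            · rw [h2']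
            · rw [h4, h2']
          exact ⟨_, _, B1, B2, B3, B4⟩
        · have h4' : ψ (j + 3) = ψ (j + 2) := fin2_eq_of_ne h4 h1
          -- pattern (e) : one (k-1) and (k-2) copies of k, v = C
          have B1 : ∀ i : Fin (j + 3 - 1),
              1 ≤ (if i = (⟨0, hn⟩ : Fin (j + 3 - 1)) then j + 2 else j + 3) ∧
              (if i = (⟨0, hn⟩ : Fin (j + 3 - 1)) then j + 2 else j + 3) ≤
                (j + 3) ^ 2 - (j + 3) - 1 := fun i => by split <;> omega
          have B2 : 1 ≤ (j + 3) ^ 2 - (j + 3) - 1 ∧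
              (j + 3) ^ 2 - (j + 3) - 1 ≤ (j + 3) ^ 2 - (j + 3) - 1 := by omega
          have B3 : ∑ i : Fin (j + 3 - 1),
              (if i = (⟨0, hn⟩ : Fin (j + 3 - 1)) then j + 2 else j + 3) =
              (j + 3) ^ 2 - (j + 3) - 1 := by
            rw [sum_one_special]
            have h5 : (j + 2) + (j + 3 - 1 - 1) * (j + 3) = j * j + 5 * j + 5 := by
              rw [show j + 3 - 1 - 1 = j + 1 by omega]; ring
            rw [hjj] at h5; omega
          have B4 : ∀ i : Fin (j + 3 - 1),
              ψ (if i = (⟨0, hn⟩ : Fin (j + 3 - 1)) then j + 2 else j + 3) =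
              ψ ((j + 3) ^ 2 - (j + 3) - 1) := by
            intro i; split
            · rw [h3']
            · rw [h4', h3']
          exact ⟨_, _, B1, B2, B3, B4⟩

/-- For `k ≥ 3` and `b > 0` with `(k-2) ∣ b`, set `m = b/(k-2)`.  The 2-color Rado number
of `x₁ + ⋯ + x_{k-1} = x_k + b` equals `m - ⌈m/(k² - k - 1)⌉ + 1`: every 2-coloring of
`[1, m - ⌈m/(k²-k-1)⌉ + 1]` admits a monochromatic solution, and some 2-coloring of
`[1, m - ⌈m/(k²-k-1)⌉]` admits none.  (`⌈/⌉` is ceiling division on `ℕ`.) -/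
theorem rado_number_sum_eq_xk_plus_b_two_colors
    (k b m : ℕ) (hk : 3 ≤ k) (hb : 0 < b) (hdvd : (k - 2) ∣ b) (hm : m = b / (k - 2)) :
    (∀ χ : ℕ → Fin 2,
        ∃ (x : Fin (k - 1) → ℕ) (y : ℕ),
          (∀ i, x i ∈ Finset.Icc 1 (m - m ⌈/⌉ (k ^ 2 - k - 1) + 1)) ∧
          y ∈ Finset.Icc 1 (m - m ⌈/⌉ (k ^ 2 - k - 1) + 1) ∧
          (∑ i, x i) = y + b ∧ (∀ i, χ (x i) = χ y)) ∧
    (∃ χ : ℕ → Fin 2,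
        ¬ ∃ (x : Fin (k - 1) → ℕ) (y : ℕ),
          (∀ i, x i ∈ Finset.Icc 1 (m - m ⌈/⌉ (k ^ 2 - k - 1))) ∧
          y ∈ Finset.Icc 1 (m - m ⌈/⌉ (k ^ 2 - k - 1)) ∧
          (∑ i, x i) = y + b ∧ (∀ i, χ (x i) = χ y)) := by
  obtain ⟨j, rfl⟩ : ∃ j, k = j + 3 := ⟨k - 3, by omega⟩
  rw [show j + 3 - 2 = j + 1 from by omega] at hdvd hm
  obtain ⟨t, rfl⟩ := hdvd
  rw [Nat.mul_div_cancel_left t (by omega : 0 < j + 1)] at hm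
  subst hm
  have hm1 : 1 ≤ m := by
    rcases Nat.eq_zero_or_pos m with h | h
    · subst h; simp at hb
    · exact h
  obtain ⟨jj, hjj⟩ : ∃ p, j * j = p := ⟨_, rfl⟩
  have hC : (j + 3) ^ 2 - (j + 3) - 1 = jj + 5 * j + 5 := by
    have h1 : (j + 3) ^ 2 = j * j + 6 * j + 9 := by ring
    rw [h1, hjj]; omega
  rw [hC]
  have hcpos : 0 < jj + 5 * j + 5 := by omega
  obtain ⟨d0, hd0⟩ : ∃ d0, m ⌈/⌉ (jj + 5 * j + 5) = d0 := ⟨_, rfl⟩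
  rw [hd0]
  have hdm : m ≤ (jj + 5 * j + 5) * d0 := by
    have h := le_smul_ceilDiv (b := m) hcpos
    rw [smul_eq_mul, hd0] at h
    exact h
  have hd0pos : 1 ≤ d0 := by
    rcases Nat.eq_zero_or_pos d0 with h | h
    · rw [h, mul_zero] at hdm; omega
    · exact h
  have hdm2 : (jj + 5 * j + 5) * (d0 - 1) < m := by
    by_contra hcon
    push_neg at hcon
    have h2 : m ⌈/⌉ (jj + 5 * j + 5) ≤ d0 - 1 :=
      (ceilDiv_le_iff_le_smul hcpos).2 (by rw [smul_eq_mul]; exact hcon)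
    rw [hd0] at h2
    omega
  obtain ⟨e, rfl⟩ : ∃ e, d0 = e + 1 := ⟨d0 - 1, by omega⟩
  rw [Nat.add_sub_cancel] at hdm2
  -- atomize the products that omega cannot handle
  obtain ⟨E, hE⟩ : ∃ z, (jj + 5 * j + 5) * e = z := ⟨_, rfl⟩
  obtain ⟨E1, hE1⟩ : ∃ z, (jj + 5 * j + 5) * (e + 1) = z := ⟨_, rfl⟩
  rw [hE] at hdm2
  rw [hE1] at hdm
  have hEe : e ≤ E := by rw [← hE]; exact Nat.le_mul_of_pos_left e hcpos
  obtain ⟨B1, hB1⟩ : ∃ z, (j + 1) * m = z := ⟨_, rfl⟩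
  have hM : (j + 2) * m = m + B1 := by rw [← hB1]; ring
  have hcard : ∀ z : ℕ, ∑ _i : Fin (j + 3 - 1), z = (j + 2) * z := by
    intro z
    rw [Finset.sum_const, smul_eq_mul, Finset.card_univ, Fintype.card_fin]
    congr 1
  rw [hB1]
  constructor
  · -- every 2-coloring of [1, m - d + 1] has a monochromatic solution
    intro χ
    rcases Nat.eq_zero_or_pos e with he | he
    · -- d = 1 : the trivial solution x_i = y = m
      subst he
      have hmm : m ∈ Finset.Icc 1 (m - (0 + 1) + 1) := by rw [Finset.mem_Icc]; omega
      have hss : ∑ _i : Fin (j + 3 - 1), m = m + B1 := by rw [hcard, hM]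
      exact ⟨fun _ => m, m, fun _ => hmm, hmm, hss, fun _ => rfl⟩
    · -- d ≥ 2 : scale the homogeneous solution by e := d - 1 around m
      obtain ⟨a, v, hab, hvb, hsums, hmono⟩ :=
        homog' (j + 3) (by omega) (fun s => χ (m - s * e))
      rw [hC] at hab hvb
      have hwle : ∀ i, a i * e ≤ E := by
        intro i
        rw [← hE]
        exact Nat.mul_le_mul_right e (hab i).2
      have hvle : v * e ≤ E := by
        rw [← hE]
        exact Nat.mul_le_mul_right e hvb.2
      have hmem : ∀ i, m - a i * e ∈ Finset.Icc 1 (m - (e + 1) + 1) := by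
        intro i
        rw [Finset.mem_Icc]
        have h1 := hwle i
        have h2 : e ≤ a i * e := Nat.le_mul_of_pos_left e (by have := (hab i).1; omega)
        obtain ⟨w, hw⟩ : ∃ w, a i * e = w := ⟨_, rfl⟩
        rw [hw] at h1 h2 ⊢
        omega
      have hvmem : m - v * e ∈ Finset.Icc 1 (m - (e + 1) + 1) := by
        rw [Finset.mem_Icc]
        have h2 : e ≤ v * e := Nat.le_mul_of_pos_left e (by omega)
        obtain ⟨w, hw⟩ : ∃ w, v * e = w := ⟨_, rfl⟩
        rw [hw] at hvle h2 ⊢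
        omega
      have hse : (∑ i : Fin (j + 3 - 1), (m - a i * e)) = (m - v * e) + B1 := by
        rw [Finset.sum_tsub_distrib _ (fun i _ => le_trans (hwle i) hdm2.le)]
        rw [hcard, ← Finset.sum_mul, hsums]
        obtain ⟨w, hw⟩ : ∃ w, v * e = w := ⟨_, rfl⟩
        rw [hw] at hvle ⊢
        omega
      exact ⟨fun i => m - a i * e, m - v * e, hmem, hvmem, hse, fun i => hmono i⟩
  · -- the critical coloring of [1, m - d]
    obtain ⟨P, hP⟩ : ∃ z, (j + 2) * (e + 1) = z := ⟨_, rfl⟩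
    obtain ⟨Q, hQ⟩ : ∃ z, (j + 2) * P = z := ⟨_, rfl⟩
    obtain ⟨R, hR⟩ : ∃ z, (j + 1) * (e + 1) = z := ⟨_, rfl⟩
    have hPQ : R + Q = E1 := by
      rw [← hQ, ← hP, ← hE1, ← hR, ← hjj]; ring
    refine ⟨fun s => if s + P ≤ m ∧ m + 1 ≤ s + Q then 1 else 0, ?_⟩
    rintro ⟨x, y, hx, hy, hsum, hcol⟩
    have hcol' : ∀ i, (if x i + P ≤ m ∧ m + 1 ≤ x i + Q then (1 : Fin 2) else 0)
        = (if y + P ≤ m ∧ m + 1 ≤ y + Q then (1 : Fin 2) else 0) := hcol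
    simp only [Finset.mem_Icc] at hx hy
    have hem : e + 1 ≤ m := by omega
    have hxe : ∀ i, x i + (e + 1) ≤ m := by
      intro i
      have := hx i
      omega
    have hdist : (∑ i : Fin (j + 3 - 1), (x i + P))
        = (∑ i : Fin (j + 3 - 1), x i) + (j + 2) * P := by
      rw [Finset.sum_add_distrib, hcard]
    have hdist2 : (∑ i : Fin (j + 3 - 1), (x i + (e + 1)))
        = (∑ i : Fin (j + 3 - 1), x i) + (j + 2) * (e + 1) := by
      rw [Finset.sum_add_distrib, hcard]
    by_cases hyb : y + P ≤ m ∧ m + 1 ≤ y + Q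
    · -- y is "blue" : every x i is blue, and the sum is then too large
      have hxb : ∀ i, x i + P ≤ m := by
        intro i
        by_contra hcon
        have h := hcol' i
        rw [if_pos hyb, if_neg (by omega : ¬(x i + P ≤ m ∧ m + 1 ≤ x i + Q))] at h
        exact absurd h (by decide)
      have hs1 : (∑ i : Fin (j + 3 - 1), x i) + (j + 2) * P ≤ (j + 2) * m := by
        have h := Finset.sum_le_sum (s := Finset.univ)
          (f := fun i : Fin (j + 3 - 1) => x i + P) (g := fun _ => m) (fun i _ => hxb i)
        rw [hdist, hcard] at h
        exact h
      rw [hsum, hQ, hM] at hs1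
      omega
    · -- y is "red"
      have hxr : ∀ i, x i + P ≤ m → x i + Q ≤ m := by
        intro i hA
        by_contra hB
        have h := hcol' i
        rw [if_neg hyb, if_pos (by omega : x i + P ≤ m ∧ m + 1 ≤ x i + Q)] at h
        exact absurd h (by decide)
      by_cases hall : ∀ i, m + 1 ≤ x i + P
      · -- all x i in the low red zone : the sum lands in the blue zone
        have hs1 : (j + 2) * (m + 1) ≤ (∑ i : Fin (j + 3 - 1), x i) + (j + 2) * P := by
          have h := Finset.sum_le_sum (s := Finset.univ)
            (f := fun _ : Fin (j + 3 - 1) => m + 1) (g := fun i => x i + P) (fun i _ => hall i)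
          rw [hdist, hcard] at h
          exact h
        have hs2 : (∑ i : Fin (j + 3 - 1), x i) + (j + 2) * (e + 1) ≤ (j + 2) * m := by
          have h := Finset.sum_le_sum (s := Finset.univ)
            (f := fun i : Fin (j + 3 - 1) => x i + (e + 1)) (g := fun _ => m) (fun i _ => hxe i)
          rw [hdist2, hcard] at h
          exact h
        have hM1 : (j + 2) * (m + 1) = m + B1 + (j + 2) := by rw [← hB1]; ring
        rw [hsum, hQ, hM1] at hs1
        rw [hsum, hP, hM] at hs2
        have hyQ : ¬(m + 1 ≤ y + Q) := fun hcon => hyb ⟨by omega, hcon⟩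
        omega
      · -- some x i0 in the high red zone : the sum is at least c·d ≥ m
        push_neg at hall
        obtain ⟨i0, hi0⟩ := hall
        have hQ0 : x i0 + Q ≤ m := hxr i0 (by omega)
        have hdist3 : (∑ i ∈ Finset.univ.erase i0, (x i + (e + 1)))
            = (∑ i ∈ Finset.univ.erase i0, x i) + (j + 1) * (e + 1) := by
          rw [Finset.sum_add_distrib, Finset.sum_const,
            Finset.card_erase_of_mem (Finset.mem_univ _), Finset.card_univ,
            Fintype.card_fin, smul_eq_mul, show j + 3 - 1 - 1 = j + 1 from by omega]
        have hs1 : (∑ i ∈ Finset.univ.erase i0, x i) + (j + 1) * (e + 1)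
            ≤ (j + 1) * m := by
          have h := Finset.sum_le_sum (s := Finset.univ.erase i0)
            (f := fun i => x i + (e + 1)) (g := fun _ => m) (fun i _ => hxe i)
          rw [hdist3, Finset.sum_const, Finset.card_erase_of_mem (Finset.mem_univ _),
            Finset.card_univ, Fintype.card_fin, smul_eq_mul,
            show j + 3 - 1 - 1 = j + 1 from by omega] at h
          exact h
        have hsplit : x i0 + (∑ i ∈ Finset.univ.erase i0, x i) = y + B1 := by
          rw [Finset.add_sum_erase _ _ (Finset.mem_univ i0), hsum]
        rw [hR, hB1] at hs1
        omega
end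

section
/- Let k ≥ 3. The 2-coloring χ of the interval [1, k² - k - 2] that assigns color 1 to the integers in [1, k-2] and in [k² - 2k + 1, k² - k - 2], and color 2 to the integers in [k-1, k² - 2k] (the pattern 1^{k-2} 2^{(k-1)(k-2)} 1^{k-2}), satisfies the excellence condition for the equation x_1 + ... + x_{k-1} = x_k: for every integer j with 0 ≤ j ≤ k-2 it admits no monochromatic solution of x_1 + x_2 + ... + x_{k-1} + j = x_k. -/
/-- For `k ≥ 3`, the 2-coloring of `[1, k² - k - 2]` with the pattern
`1^(k-2) 2^((k-1)(k-2)) 1^(k-2)` — color 1 on `[1, k-2]` and `[k² - 2k + 1, k² - k - 2]`,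
color 2 on `[k-1, k² - 2k]` — satisfies the excellence condition for
`x₁ + ⋯ + x_{k-1} = x_k` (where `s = k - 2`): for every `j` with `0 ≤ j ≤ k - 2` it
admits no monochromatic solution of `x₁ + ⋯ + x_{k-1} + j = x_k`. -/
theorem block_coloring_excellence (k : ℕ) (hk : 3 ≤ k) :
    ∀ j ≤ k - 2, ¬ ∃ (x : Fin (k - 1) → ℕ) (y : ℕ),
      (∀ i, x i ∈ Finset.Icc 1 (k ^ 2 - k - 2)) ∧ y ∈ Finset.Icc 1 (k ^ 2 - k - 2) ∧
      (∑ i, x i) + j = y ∧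
      (∀ i, (if k - 1 ≤ x i ∧ x i ≤ k ^ 2 - 2 * k then 2 else 1) =
            (if k - 1 ≤ y ∧ y ≤ k ^ 2 - 2 * k then (2 : ℕ) else 1)) := by
  obtain ⟨m, rfl⟩ : ∃ m, k = m + 3 := ⟨k - 3, by omega⟩
  intro j hj
  rintro ⟨x, y, hx, hy, hsum, hcol⟩
  have e1 : (m + 3) ^ 2 = m * m + 6 * m + 9 := by ring
  rw [e1] at hy hcol hx
  simp only [Finset.mem_Icc] at hy hx
  have hN : (m + 3) ^ 2 - (m + 3) - 2 = m * m + 5 * m + 4 := by rw [e1]; omega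
  have hN2 : m * m + 6 * m + 9 - 2 * (m + 3) = m * m + 4 * m + 3 := by omega
  rw [hN2] at hcol
  obtain ⟨M, hM⟩ : ∃ M, m * m = M := ⟨_, rfl⟩
  rw [hM] at hy hx hcol hN hN2
  have hcard : (Finset.univ : Finset (Fin (m + 3 - 1))).card = m + 2 := by
    simp
  by_cases hyc : m + 3 - 1 ≤ y ∧ y ≤ M + 4 * m + 3
  · -- color 2 case
    have hxi : ∀ i, m + 2 ≤ x i := by
      intro i
      have h := hcol i
      rw [if_pos hyc] at h
      split_ifs at h with h2
      · omega
      · omega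
    have hs : (m + 2) * (m + 2) ≤ ∑ i, x i := by
      calc (m + 2) * (m + 2) = (Finset.univ : Finset (Fin (m + 3 - 1))).card • (m + 2) := by
            rw [hcard, smul_eq_mul]
        _ ≤ ∑ i, x i := Finset.card_nsmul_le_sum _ _ _ (fun i _ => hxi i)
    have he : (m + 2) * (m + 2) = M + 4 * m + 4 := by rw [← hM]; ring
    omega
  · -- color 1 case
    have hxi : ∀ i, x i ≤ m + 1 ∨ M + 4 * m + 4 ≤ x i := by
      intro i
      have h := hcol i
      rw [if_neg hyc] at h
      split_ifs at h with h2
      · omega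
      · omega
    by_cases hbig : ∃ i, M + 4 * m + 4 ≤ x i
    · obtain ⟨i, hi⟩ := hbig
      have hsplit : ∑ l, x l = x i + ∑ l ∈ Finset.univ.erase i, x l :=
        (Finset.add_sum_erase _ _ (Finset.mem_univ i)).symm
      have hrest : (m + 1) ≤ ∑ l ∈ Finset.univ.erase i, x l := by
        calc (m + 1) = (Finset.univ.erase i).card • 1 := by
              rw [Finset.card_erase_of_mem (Finset.mem_univ i), hcard]; simp
          _ ≤ ∑ l ∈ Finset.univ.erase i, x l :=
              Finset.card_nsmul_le_sum _ _ _ (fun l _ => (hx l).1)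
      have hy2 : y ≤ M + 5 * m + 4 := by have := hy.2; omega
      have hj' : j ≤ m + 1 := by omega
      omega
    · push_neg at hbig
      have hsmall : ∀ i, x i ≤ m + 1 := fun i => by
        rcases hxi i with h | h
        · exact h
        · exact absurd h (by have := hbig i; omega)
      have hub : ∑ i, x i ≤ (m + 2) * (m + 1) := by
        calc ∑ i, x i ≤ (Finset.univ : Finset (Fin (m + 3 - 1))).card • (m + 1) :=
              Finset.sum_le_card_nsmul _ _ _ (fun i _ => hsmall i)
          _ = (m + 2) * (m + 1) := by rw [hcard, smul_eq_mul]
      have hlb : m + 2 ≤ ∑ i, x i := by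
        calc m + 2 = (Finset.univ : Finset (Fin (m + 3 - 1))).card • 1 := by
              rw [hcard]; simp
          _ ≤ ∑ i, x i := Finset.card_nsmul_le_sum _ _ _ (fun i _ => (hx i).1)
      have he : (m + 2) * (m + 1) = M + 3 * m + 2 := by rw [← hM]; ring
      omega
end
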